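/- Let n ≥ 3 be an integer and m a nonnegative integer. There exists a constant A > 0, depending only on n and m, such that for every x ∈ H and every y' ∈ ℝ^{n−1} with |y'| > 1, writing s' = |x|/|y'|: if s' > 1 then |P_m(x,y')| ≤ A·(x_n/|x−(y',0)|ⁿ)·s'^{m+n−1}, and if s' ≤ 1 then |P_m(x,y')| ≤ A·(x_n/|x−(y',0)|ⁿ)·s'^{m}. -/

import Mathlib

/-!
With `λ = N/2`, `s = |x|/|y'|`, `t = ⟨x,(y',0)⟩/(|x||y'|)` and `r = |x-(y',0)|/|y'|`, one has
`r² = 1 - 2ts + s²` and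
`P_m(x,y') = 2x_n/(ω_N |x-(y',0)|^N) · (1 - r^N Σ_{k<m} C_k^λ(t) s^k)`.
Expanding the binomial series `(1-u)^{-λ}` at `u = 2ts - s²` and regrouping the absolutely
convergent double series along antidiagonals gives the generating function
`Σ_k C_k^λ(t) s^k = r^{-N}` for small `s`, so there the bracket is `r^N` times the tail
`Σ_{k≥m} C_k^λ(t) s^k = O(s^m)`. The same double series at `s = 1/3` gives the bound
`|C_k^λ(t)| ≤ (9/2)^λ 3^k`, with which the remaining ranges of `s` are estimated termwise, using
`r ≤ 1 + s`.
-/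

open MeasureTheory Real ENNReal

noncomputable section

/-- `ES n` is Euclidean space `ℝⁿ`. Throughout, the ambient dimension is `n + 1`,
so that the paper's dimension `n ≥ 3` corresponds to the hypothesis `2 ≤ n`. -/
abbrev ES (n : ℕ) := EuclideanSpace ℝ (Fin n)

/-- The last coordinate `x_n` of a point of `ℝ^{n+1}`. -/
def lastc {n : ℕ} (x : ES (n + 1)) : ℝ := x (Fin.last n)

/-- The open upper half space `H ⊆ ℝ^{n+1}`. -/
def hsp (n : ℕ) : Set (ES (n + 1)) := {x | 0 < lastc x}

/-- The embedding `y' ↦ (y', 0)` of the boundary `ℝⁿ` into `ℝ^{n+1}`. -/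
def emb {n : ℕ} (y' : ES n) : ES (n + 1) :=
  (EuclideanSpace.equiv (Fin (n + 1)) ℝ).symm (Fin.snoc (fun i => y' i) 0)

/-- Reflection `y* = (y', -y_n)` in the boundary hyperplane. -/
def reflB {n : ℕ} (y : ES (n + 1)) : ES (n + 1) :=
  (EuclideanSpace.equiv (Fin (n + 1)) ℝ).symm
    (Function.update (fun i => y i) (Fin.last n) (-(y (Fin.last n))))

/-- `ω_N = 2 π^{N/2} / Γ(N/2)`, the surface area of the unit sphere in `ℝ^N`. -/
def sArea (N : ℕ) : ℝ := 2 * π ^ ((N : ℝ) / 2) / Real.Gamma ((N : ℝ) / 2)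

/-- The Gegenbauer (ultraspherical) polynomial `C_k^λ(t)`, given by its explicit
formula; these are the coefficients of the generating function
`(1 - 2 t r + r²)^{-λ} = Σ_k C_k^λ(t) r^k`. -/
def gegen (lam : ℝ) (k : ℕ) (t : ℝ) : ℝ :=
  ∑ j ∈ Finset.range (k / 2 + 1),
    (-1 : ℝ) ^ j * Real.Gamma (lam + k - j) /
      (Real.Gamma lam * (Nat.factorial j) * (Nat.factorial (k - 2 * j))) * (2 * t) ^ (k - 2 * j)

/-- The Poisson kernel of the upper half space `H ⊆ ℝ^{n+1}`. -/
def pk (n : ℕ) (x : ES (n + 1)) (y' : ES n) : ℝ :=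
  2 * lastc x / (sArea (n + 1) * ‖x - emb y'‖ ^ (n + 1))

/-- The modified Poisson kernel of order `m` of the upper half space `H ⊆ ℝ^{n+1}`. -/
def mpk (n m : ℕ) (x : ES (n + 1)) (y' : ES n) : ℝ :=
  if ‖y'‖ ≤ 1 then pk n x y'
  else pk n x y' - ∑ k ∈ Finset.range m,
    (2 * lastc x * ‖x‖ ^ k) / (sArea (n + 1) * ‖y'‖ ^ (n + 1 + k)) *
      gegen (((n : ℝ) + 1) / 2) k ((inner ℝ x (emb y') : ℝ) / (‖x‖ * ‖y'‖))

open Finset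

theorem Real.hasSum_multichoose_mul_pow (a : ℝ) {u : ℝ} (hu : |u| < 1) :
    HasSum (fun i ↦ Ring.multichoose a i * u ^ i) ((1 - u) ^ (-a)) := by
  have h := (one_div_one_sub_rpow_hasFPowerSeriesOnBall_zero a).hasSum
    (y := u) (by simpa [enorm_eq_nnnorm, ← NNReal.coe_lt_one] using hu)
  simp only [FormalMultilinearSeries.ofScalars_apply_eq, smul_eq_mul, zero_add] at h
  rw [Real.rpow_neg (by linarith [(abs_lt.mp hu).2]), ← one_div]
  simpa only [Ring.multichoose_eq] using h

theorem Real.Gamma_add_nat_eq_ascPochhammer_mul {a : ℝ} (ha : 0 < a) (i : ℕ) :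
    Gamma (a + i) = (ascPochhammer ℝ i).eval a * Gamma a := by
  induction i with
  | zero => simp
  | succ i ih =>
    rw [ascPochhammer_succ_eval, Nat.cast_succ, ← add_assoc, Gamma_add_one (by positivity), ih]
    ring

theorem Real.Gamma_add_nat_div_mul_factorial {a : ℝ} (ha : 0 < a) (i : ℕ) :
    Gamma (a + i) / (Gamma a * i.factorial) = Ring.multichoose a i := by
  have h := Ring.factorial_nsmul_multichoose_eq_ascPochhammer a i
  rw [nsmul_eq_mul, Polynomial.ascPochhammer_smeval_eq_eval] at h
  have hG := (Gamma_pos_of_pos ha).ne'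
  rw [Gamma_add_nat_eq_ascPochhammer_mul ha, ← h]
  field_simp

theorem Real.Gamma_add_nat_div_eq_multichoose_mul_choose {a : ℝ} (ha : 0 < a) {i j : ℕ}
    (h : j ≤ i) :
    Gamma (a + i) / (Gamma a * j.factorial * (i - j).factorial) =
      Ring.multichoose a i * i.choose j := by
  have hG := (Gamma_pos_of_pos ha).ne'
  have := Nat.choose_pos h
  rw [← Gamma_add_nat_div_mul_factorial ha, ← Nat.choose_mul_factorial_mul_factorial h]
  push_cast
  field_simp

theorem Real.multichoose_pos {a : ℝ} (ha : 0 < a) (i : ℕ) : 0 < Ring.multichoose a i := by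
  rw [← Gamma_add_nat_div_mul_factorial ha]
  have := Gamma_pos_of_pos ha
  have := Gamma_pos_of_pos (add_pos_of_pos_of_nonneg ha i.cast_nonneg)
  positivity

theorem HasSum.sum_antidiagonal {A α : Type*} [AddCommMonoid A] [HasAntidiagonal A]
    [AddCommMonoid α] [TopologicalSpace α] [ContinuousAdd α] [RegularSpace α]
    {f : A × A → α} {a : α} (h : HasSum f a) :
    HasSum (fun n ↦ ∑ p ∈ antidiagonal n, f p) a :=
  (HasAntidiagonal.sigmaAntidiagonalEquivProd.hasSum_iff.mpr h).sigma fun n ↦ by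
    rw [← sum_coe_sort]
    exact hasSum_fintype _

/-- Expanding `(c (a + b)) ^ i` binomially in `∑ i, multichoose lam i * (c (a + b)) ^ i`
gives this double series; with `a = 2t`, `b = -s`, `c = s` its antidiagonals are the terms
`C_k^lam(t) s^k` of the Gegenbauer generating function. -/
def binomialDoubleTerm (lam a b c : ℝ) (p : ℕ × ℕ) : ℝ :=
  Ring.multichoose lam p.1 * p.1.choose p.2 * a ^ (p.1 - p.2) * b ^ p.2 * c ^ p.1

section binomialDoubleTerm

variable {lam : ℝ}

theorem hasSum_binomialDoubleTerm_row (a b c : ℝ) (i : ℕ) :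
    HasSum (fun j ↦ binomialDoubleTerm lam a b c (i, j))
      (Ring.multichoose lam i * (c * (a + b)) ^ i) := by
  have hzero : ∀ j ∉ range (i + 1), binomialDoubleTerm lam a b c (i, j) = 0 := fun j hj ↦ by
    simp [binomialDoubleTerm, Nat.choose_eq_zero_of_lt (by simpa [Nat.lt_succ_iff] using hj)]
  suffices ∑ j ∈ range (i + 1), binomialDoubleTerm lam a b c (i, j) =
      Ring.multichoose lam i * (c * (a + b)) ^ i from this ▸ hasSum_sum_of_ne_finset_zero hzero
  rw [mul_pow, add_comm a, add_pow, mul_sum, mul_sum]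
  refine sum_congr rfl fun j _ ↦ ?_
  simp only [binomialDoubleTerm]
  ring

theorem abs_binomialDoubleTerm (hlam : 0 < lam) (a b c : ℝ) (p : ℕ × ℕ) :
    |binomialDoubleTerm lam a b c p| = binomialDoubleTerm lam |a| |b| |c| p := by
  simp only [binomialDoubleTerm, abs_mul, abs_pow, Nat.abs_cast,
    abs_of_pos (Real.multichoose_pos hlam _)]

theorem hasSum_binomialDoubleTerm (hlam : 0 < lam) {a b c : ℝ} (h : |c| * (|a| + |b|) < 1) :
    HasSum (binomialDoubleTerm lam a b c) ((1 - c * (a + b)) ^ (-lam)) := by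
  have hnonneg : 0 ≤ binomialDoubleTerm lam |a| |b| |c| := fun p ↦ by
    rw [← abs_binomialDoubleTerm hlam]
    exact abs_nonneg _
  have habs : Summable (binomialDoubleTerm lam |a| |b| |c|) := by
    refine (summable_prod_of_nonneg hnonneg).mpr
      ⟨fun i ↦ (hasSum_binomialDoubleTerm_row _ _ _ i).summable, ?_⟩
    simp only [(hasSum_binomialDoubleTerm_row _ _ _ _).tsum_eq]
    exact (Real.hasSum_multichoose_mul_pow lam (by rwa [abs_of_nonneg (by positivity)])).summable
  have hsum : Summable (binomialDoubleTerm lam a b c) :=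
    Summable.of_abs (by simpa only [abs_binomialDoubleTerm hlam] using habs)
  have hbinom := Real.hasSum_multichoose_mul_pow lam (u := c * (a + b)) <| by
    calc |c * (a + b)| ≤ |c| * (|a| + |b|) := by rw [abs_mul]; gcongr; exact abs_add_le a b
      _ < 1 := h
  rw [hbinom.unique (hsum.hasSum.prod_fiberwise (hasSum_binomialDoubleTerm_row a b c))]
  exact hsum.hasSum

end binomialDoubleTerm

section Gegenbauer

variable {lam : ℝ}

theorem sum_antidiagonal_binomialDoubleTerm (hlam : 0 < lam) (t s : ℝ) (k : ℕ) :
    ∑ p ∈ antidiagonal k, binomialDoubleTerm lam (2 * t) (-s) s p = gegen lam k t * s ^ k := by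
  rw [← Nat.sum_antidiagonal_swap, Nat.sum_antidiagonal_eq_sum_range_succ_mk, gegen, sum_mul]
  rw [← sum_subset (range_subset_range.mpr (show k / 2 + 1 ≤ k + 1 by omega)) fun j hj hj' ↦ by
    simp only [mem_range] at hj hj'
    simp [binomialDoubleTerm, Nat.choose_eq_zero_of_lt (show k - j < j by omega)]]
  refine sum_congr rfl fun j hj ↦ ?_
  have hj : 2 * j ≤ k := by simp only [mem_range] at hj; omega
  have hcast : lam + (k : ℝ) - j = lam + ((k - j : ℕ) : ℝ) := by
    rw [Nat.cast_sub (by omega)]; ring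
  rw [hcast, show k - 2 * j = k - j - j by omega, mul_div_assoc,
    Real.Gamma_add_nat_div_eq_multichoose_mul_choose hlam (show j ≤ k - j by omega)]
  simp only [binomialDoubleTerm, Prod.swap_prod_mk, neg_pow s]
  rw [show s ^ k = s ^ j * s ^ (k - j) by rw [← pow_add]; congr 1; omega]
  ring

theorem hasSum_gegen_mul_pow (hlam : 0 < lam) {t s : ℝ} (h : |s| * (2 * |t| + |s|) < 1) :
    HasSum (fun k ↦ gegen lam k t * s ^ k) ((1 - 2 * t * s + s ^ 2) ^ (-lam)) := by
  have h' : |s| * (|2 * t| + |-s|) < 1 := by rwa [abs_neg, abs_mul, abs_two]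
  convert (hasSum_binomialDoubleTerm hlam h').sum_antidiagonal using 1
  · exact funext fun k ↦ (sum_antidiagonal_binomialDoubleTerm hlam t s k).symm
  · ring_nf

theorem abs_gegen_mul_pow_le (hlam : 0 < lam) {t s : ℝ} (h : |s| * (2 * |t| + |s|) < 1)
    (k : ℕ) : |gegen lam k t * s ^ k| ≤ (1 - |s| * (2 * |t| + |s|)) ^ (-lam) := by
  have hmaj := hasSum_binomialDoubleTerm hlam (a := 2 * |t|) (b := |s|) (c := |s|)
    (by rwa [abs_abs, abs_mul, abs_two, abs_abs])
  rw [← sum_antidiagonal_binomialDoubleTerm hlam]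
  calc |∑ p ∈ antidiagonal k, binomialDoubleTerm lam (2 * t) (-s) s p|
      ≤ ∑ p ∈ antidiagonal k, binomialDoubleTerm lam (2 * |t|) |s| |s| p := by
        refine (abs_sum_le_sum_abs _ _).trans_eq (sum_congr rfl fun p _ ↦ ?_)
        rw [abs_binomialDoubleTerm hlam, abs_neg, abs_mul, abs_two]
    _ ≤ (1 - |s| * (2 * |t| + |s|)) ^ (-lam) := by
        refine sum_le_hasSum _ (fun p _ ↦ ?_) hmaj
        rw [← abs_two, ← abs_mul, ← abs_abs s, ← abs_binomialDoubleTerm hlam]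
        exact abs_nonneg _

theorem abs_gegen_le (hlam : 0 < lam) {t : ℝ} (ht : |t| ≤ 1) (k : ℕ) :
    |gegen lam k t| ≤ (9 / 2) ^ lam * 3 ^ k := by
  have hthird : |(1 / 3 : ℝ)| = 1 / 3 := abs_of_pos (by norm_num)
  have h := abs_gegen_mul_pow_le hlam (t := t) (s := 1 / 3) (by rw [hthird]; linarith) k
  rw [abs_mul, abs_pow, hthird] at h
  have hbase : (2 / 9 : ℝ) ≤ 1 - 1 / 3 * (2 * |t| + 1 / 3) := by linarith
  have h29 : (2 / 9 : ℝ) ^ (-lam) = (9 / 2) ^ lam := by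
    rw [Real.rpow_neg (by norm_num), ← Real.inv_rpow (by norm_num)]
    norm_num
  calc |gegen lam k t| = |gegen lam k t| * (1 / 3) ^ k * 3 ^ k := by
        rw [mul_assoc, ← mul_pow]; norm_num
    _ ≤ (9 / 2) ^ lam * 3 ^ k := by
        gcongr
        exact h.trans (h29 ▸ Real.rpow_le_rpow_of_nonpos (by norm_num) hbase (by linarith))

theorem hasSum_gegen_half_mul_pow {N : ℕ} (hN : 0 < N) {t s r : ℝ} (hr : 0 < r)
    (hr_sq : r ^ 2 = 1 - 2 * t * s + s ^ 2) (h : |s| * (2 * |t| + |s|) < 1) :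
    HasSum (fun k ↦ gegen (N / 2) k t * s ^ k) (r ^ N)⁻¹ := by
  convert hasSum_gegen_mul_pow (lam := N / 2) (by positivity) h using 1
  rw [← hr_sq, Real.rpow_neg (sq_nonneg r), ← Real.rpow_natCast r 2, ← Real.rpow_mul hr.le,
    ← Real.rpow_natCast]
  congr 2
  push_cast
  ring

end Gegenbauer

section Truncation

variable {B ρ : ℝ} {c : ℕ → ℝ} (n m : ℕ)

theorem abs_one_sub_mul_partialSum_le_of_one_le (hc : ∀ k, |c k| ≤ B * ρ ^ k) (hρ : 1 ≤ ρ)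
    {r s : ℝ} (hs : 1 ≤ s) (hr : 0 ≤ r) (hrs : r ≤ 2 * s) :
    |1 - r ^ (n + 1) * ∑ k ∈ range m, c k * s ^ k| ≤
      (1 + 2 ^ (n + 1) * m * B * ρ ^ m) * s ^ (m + n) := by
  have hB : 0 ≤ B := by simpa using (abs_nonneg _).trans (hc 0)
  have hterm : ∀ k ∈ range m,
      |r ^ (n + 1) * (c k * s ^ k)| ≤ 2 ^ (n + 1) * B * ρ ^ m * s ^ (m + n) := fun k hk ↦ by
    have hk : k + 1 ≤ m := mem_range.mp hk
    have hck : |c k| ≤ B * ρ ^ m := (hc k).trans (by gcongr; omega)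
    rw [abs_mul, abs_mul, abs_of_nonneg (pow_nonneg hr _),
      abs_of_nonneg (pow_nonneg (zero_le_one.trans hs) k)]
    calc r ^ (n + 1) * (|c k| * s ^ k) ≤ (2 * s) ^ (n + 1) * (B * ρ ^ m * s ^ k) := by gcongr
      _ = 2 ^ (n + 1) * B * ρ ^ m * s ^ (k + 1 + n) := by ring
      _ ≤ 2 ^ (n + 1) * B * ρ ^ m * s ^ (m + n) := by gcongr
  calc |1 - r ^ (n + 1) * ∑ k ∈ range m, c k * s ^ k|
      ≤ 1 + ∑ k ∈ range m, |r ^ (n + 1) * (c k * s ^ k)| := by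
        rw [mul_sum]
        exact (abs_sub _ _).trans (by rw [abs_one]; gcongr; exact abs_sum_le_sum_abs _ _)
    _ ≤ s ^ (m + n) + m * (2 ^ (n + 1) * B * ρ ^ m * s ^ (m + n)) := by
        gcongr
        · exact one_le_pow₀ hs
        · simpa using sum_le_sum hterm
    _ = (1 + 2 ^ (n + 1) * m * B * ρ ^ m) * s ^ (m + n) := by ring

theorem abs_one_sub_mul_partialSum_le_of_le_one (hc : ∀ k, |c k| ≤ B * ρ ^ k) (hρ : 1 ≤ ρ)
    {r s : ℝ} (hs₀ : 0 ≤ s) (hs : s ≤ 1) (hr : 0 ≤ r) (hr₂ : r ≤ 2) :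
    |1 - r ^ (n + 1) * ∑ k ∈ range m, c k * s ^ k| ≤ 1 + 2 ^ (n + 1) * m * B * ρ ^ m := by
  have hB : 0 ≤ B := by simpa using (abs_nonneg _).trans (hc 0)
  have hterm : ∀ k ∈ range m, |r ^ (n + 1) * (c k * s ^ k)| ≤ 2 ^ (n + 1) * B * ρ ^ m :=
    fun k hk ↦ by
    have hck : |c k| ≤ B * ρ ^ m := (hc k).trans (by gcongr; exact (mem_range.mp hk).le)
    rw [abs_mul, abs_mul, abs_of_nonneg (pow_nonneg hr _), abs_of_nonneg (pow_nonneg hs₀ k)]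
    calc r ^ (n + 1) * (|c k| * s ^ k) ≤ 2 ^ (n + 1) * (B * ρ ^ m * 1) := by
          gcongr; exact pow_le_one₀ hs₀ hs
      _ = 2 ^ (n + 1) * B * ρ ^ m := by ring
  calc |1 - r ^ (n + 1) * ∑ k ∈ range m, c k * s ^ k|
      ≤ 1 + ∑ k ∈ range m, |r ^ (n + 1) * (c k * s ^ k)| := by
        rw [mul_sum]
        exact (abs_sub _ _).trans (by rw [abs_one]; gcongr; exact abs_sum_le_sum_abs _ _)
    _ ≤ 1 + m * (2 ^ (n + 1) * B * ρ ^ m) := by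
        gcongr
        simpa using sum_le_sum hterm
    _ = 1 + 2 ^ (n + 1) * m * B * ρ ^ m := by ring

theorem abs_one_sub_mul_partialSum_le_of_hasSum (hc : ∀ k, |c k| ≤ B * ρ ^ k) (hρ : 0 ≤ ρ)
    {r s : ℝ} (hs₀ : 0 ≤ s) (hρs : 2 * ρ * s ≤ 1) (hr : 0 < r) (hr₂ : r ≤ 2)
    (hsum : HasSum (fun k ↦ c k * s ^ k) (r ^ (n + 1))⁻¹) :
    |1 - r ^ (n + 1) * ∑ k ∈ range m, c k * s ^ k| ≤ 2 ^ (n + 2) * B * ρ ^ m * s ^ m := by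
  have hB : 0 ≤ B := by simpa using (abs_nonneg _).trans (hc 0)
  have hρs₀ : 0 ≤ ρ * s := mul_nonneg hρ hs₀
  have htail := (hasSum_nat_add_iff' m).mpr hsum
  have hgeom : HasSum (fun k ↦ B * (ρ * s) ^ m * (ρ * s) ^ k) (B * (ρ * s) ^ m * (1 - ρ * s)⁻¹) :=
    (hasSum_geometric_of_lt_one hρs₀ (by linarith)).mul_left _
  have htail_le : |(r ^ (n + 1))⁻¹ - ∑ k ∈ range m, c k * s ^ k| ≤ 2 * B * (ρ * s) ^ m := by
    refine (htail.norm_le_of_bounded hgeom fun k ↦ ?_).trans ?_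
    · rw [Real.norm_eq_abs, abs_mul, abs_pow, abs_of_nonneg hs₀]
      calc |c (k + m)| * s ^ (k + m) ≤ B * ρ ^ (k + m) * s ^ (k + m) := by gcongr; exact hc _
        _ = B * (ρ * s) ^ m * (ρ * s) ^ k := by ring
    · have : (1 - ρ * s)⁻¹ ≤ 2 := by rw [inv_le_comm₀ (by linarith) two_pos]; linarith
      calc B * (ρ * s) ^ m * (1 - ρ * s)⁻¹ ≤ B * (ρ * s) ^ m * 2 := by gcongr
        _ = 2 * B * (ρ * s) ^ m := by ring
  calc |1 - r ^ (n + 1) * ∑ k ∈ range m, c k * s ^ k|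
      = |r ^ (n + 1) * ((r ^ (n + 1))⁻¹ - ∑ k ∈ range m, c k * s ^ k)| := by
        rw [mul_sub, mul_inv_cancel₀ (by positivity)]
    _ = r ^ (n + 1) * |(r ^ (n + 1))⁻¹ - ∑ k ∈ range m, c k * s ^ k| := by
        rw [abs_mul, abs_of_pos (by positivity)]
    _ ≤ 2 ^ (n + 1) * (2 * B * (ρ * s) ^ m) := by gcongr
    _ = 2 ^ (n + 2) * B * ρ ^ m * s ^ m := by ring

theorem exists_abs_one_sub_mul_partialSum_le (hB : 0 ≤ B) (hρ : 1 ≤ ρ) :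
    ∃ K > 0, ∀ c : ℕ → ℝ, (∀ k, |c k| ≤ B * ρ ^ k) → ∀ r s : ℝ, 0 < r → 0 < s → r ≤ 1 + s →
      (2 * ρ * s ≤ 1 → HasSum (fun k ↦ c k * s ^ k) (r ^ (n + 1))⁻¹) →
      (1 < s → |1 - r ^ (n + 1) * ∑ k ∈ range m, c k * s ^ k| ≤ K * s ^ (m + n)) ∧
      (s ≤ 1 → |1 - r ^ (n + 1) * ∑ k ∈ range m, c k * s ^ k| ≤ K * s ^ m) := by
  set K₁ := 1 + 2 ^ (n + 1) * m * B * ρ ^ m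
  set K₂ := 2 ^ (n + 2) * B * ρ ^ m
  have hρ₀ : 0 ≤ ρ := by linarith
  have hK₁ : 1 ≤ K₁ := le_add_of_nonneg_right (by positivity)
  have hK₂ : 0 ≤ K₂ := by positivity
  have h2ρ : 1 ≤ (2 * ρ) ^ m := one_le_pow₀ (by linarith)
  refine ⟨K₁ * (2 * ρ) ^ m + K₂, by positivity, fun c hc r s hr hs hrs hsum ↦
    ⟨fun hs₁ ↦ ?_, fun hs₁ ↦ ?_⟩⟩
  · calc _ ≤ K₁ * s ^ (m + n) :=
          abs_one_sub_mul_partialSum_le_of_one_le n m hc hρ hs₁.le hr.le (by linarith)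
      _ ≤ (K₁ * (2 * ρ) ^ m + K₂) * s ^ (m + n) := by gcongr; nlinarith
  rcases le_or_gt (2 * ρ * s) 1 with hρs | hρs
  · calc _ ≤ K₂ * s ^ m :=
          abs_one_sub_mul_partialSum_le_of_hasSum n m hc hρ₀ hs.le hρs hr (by linarith) (hsum hρs)
      _ ≤ (K₁ * (2 * ρ) ^ m + K₂) * s ^ m := by gcongr; nlinarith
  · calc _ ≤ K₁ := abs_one_sub_mul_partialSum_le_of_le_one n m hc hρ hs.le hs₁ hr.le (by linarith)
      _ ≤ K₁ * (2 * ρ * s) ^ m := le_mul_of_one_le_right (by linarith) (one_le_pow₀ hρs.le)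
      _ ≤ (K₁ * (2 * ρ) ^ m + K₂) * s ^ m := by rw [mul_pow]; nlinarith [pow_pos hs m]

end Truncation

theorem sArea_pos {N : ℕ} (hN : 0 < N) : 0 < sArea N := by
  have := Real.Gamma_pos_of_pos (show (0 : ℝ) < N / 2 by positivity)
  unfold sArea
  positivity

section HalfSpace

variable {n : ℕ}

theorem lastc_emb (y' : ES n) : lastc (emb y') = 0 := by
  simp [lastc, emb, EuclideanSpace.equiv]

theorem norm_emb (y' : ES n) : ‖emb y'‖ = ‖y'‖ := by
  simp only [EuclideanSpace.norm_eq, Fin.sum_univ_castSucc]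
  simp [emb, EuclideanSpace.equiv]

theorem sub_emb_ne_zero_of_mem_hsp {x : ES (n + 1)} (hx : x ∈ hsp n) (y' : ES n) :
    x - emb y' ≠ 0 := fun h ↦ by
  have : lastc (x - emb y') = lastc x - lastc (emb y') := rfl
  rw [h, lastc_emb, sub_zero] at this
  exact hx.ne (this.trans (by simp [lastc]))

theorem abs_inner_emb_div_le_one (x : ES (n + 1)) (y' : ES n) :
    |(inner ℝ x (emb y') : ℝ) / (‖x‖ * ‖y'‖)| ≤ 1 := by
  rw [abs_div, abs_of_nonneg (mul_nonneg (norm_nonneg x) (norm_nonneg y')), ← norm_emb y']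
  exact div_le_one_of_le₀ (abs_real_inner_le_norm _ _) (by positivity)

theorem norm_sub_emb_div_le (x : ES (n + 1)) {y' : ES n} (hy' : y' ≠ 0) :
    ‖x - emb y'‖ / ‖y'‖ ≤ 1 + ‖x‖ / ‖y'‖ := by
  have hy₀ := norm_pos_iff.mpr hy'
  have := norm_sub_le x (emb y')
  rw [norm_emb] at this
  rw [div_le_iff₀ hy₀, add_mul, div_mul_cancel₀ _ hy₀.ne']
  linarith

theorem norm_sub_emb_div_sq {x : ES (n + 1)} {y' : ES n} (hx : x ≠ 0) (hy' : y' ≠ 0) :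
    (‖x - emb y'‖ / ‖y'‖) ^ 2 = 1 - 2 * ((inner ℝ x (emb y') : ℝ) / (‖x‖ * ‖y'‖)) * (‖x‖ / ‖y'‖) +
      (‖x‖ / ‖y'‖) ^ 2 := by
  have hsq := norm_sub_sq_real x (emb y')
  rw [norm_emb] at hsq
  have := norm_ne_zero_iff.mpr hx
  have := norm_ne_zero_iff.mpr hy'
  field_simp
  linear_combination hsq

theorem mpk_eq_of_one_lt_norm (m : ℕ) {x : ES (n + 1)} {y' : ES n} (hd : x - emb y' ≠ 0)
    (hy' : 1 < ‖y'‖) :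
    mpk n m x y' = 2 / sArea (n + 1) * (lastc x / ‖x - emb y'‖ ^ (n + 1)) *
      (1 - (‖x - emb y'‖ / ‖y'‖) ^ (n + 1) * ∑ k ∈ range m,
        gegen (((n + 1 : ℕ) : ℝ) / 2) k ((inner ℝ x (emb y') : ℝ) / (‖x‖ * ‖y'‖)) *
          (‖x‖ / ‖y'‖) ^ k) := by
  have := norm_ne_zero_iff.mpr hd
  have := (one_pos.trans hy').ne'
  rw [mpk, if_neg hy'.not_ge, pk, mul_sum, mul_sub, mul_sum, Nat.cast_succ]
  congr 1
  · field_simp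
  · refine sum_congr rfl fun k _ ↦ ?_
    rw [div_pow, div_pow, pow_add]
    field_simp

end HalfSpace

theorem stmt_12_general (n : ℕ) (m : ℕ) :
    ∃ A > (0 : ℝ), ∀ x ∈ hsp n, ∀ y' : ES n, 1 < ‖y'‖ →
      (1 < ‖x‖ / ‖y'‖ →
        |mpk n m x y'| ≤ A * (lastc x / ‖x - emb y'‖ ^ (n + 1)) * (‖x‖ / ‖y'‖) ^ (m + n)) ∧
      (‖x‖ / ‖y'‖ ≤ 1 →
        |mpk n m x y'| ≤ A * (lastc x / ‖x - emb y'‖ ^ (n + 1)) * (‖x‖ / ‖y'‖) ^ m) := by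
  set lam : ℝ := ((n + 1 : ℕ) : ℝ) / 2
  have hlam : 0 < lam := by positivity
  have hω := sArea_pos n.succ_pos
  obtain ⟨K, hK, hest⟩ := exists_abs_one_sub_mul_partialSum_le (B := (9 / 2) ^ lam) (ρ := 3) n m
    (by positivity) (by norm_num)
  refine ⟨2 / sArea (n + 1) * K, by positivity, fun x hx y' hy' ↦ ?_⟩
  have hd := sub_emb_ne_zero_of_mem_hsp hx y'
  have hx₀ : x ≠ 0 := fun h ↦ by simp [hsp, h, lastc] at hx
  have hy₀ : y' ≠ 0 := norm_pos_iff.mp (one_pos.trans hy')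
  have ht := abs_inner_emb_div_le_one x y'
  set t := (inner ℝ x (emb y') : ℝ) / (‖x‖ * ‖y'‖)
  set s := ‖x‖ / ‖y'‖
  obtain ⟨hlarge, hsmall⟩ := hest _ (fun k ↦ abs_gegen_le hlam ht k) _ _
    (by positivity) (by positivity) (norm_sub_emb_div_le x hy₀) fun hs ↦
      hasSum_gegen_half_mul_pow n.succ_pos (by positivity) (norm_sub_emb_div_sq hx₀ hy₀) <| by
        rw [abs_of_pos (by positivity)]; nlinarith [abs_nonneg t, (by positivity : 0 < s)]
  have hfac : 0 ≤ 2 / sArea (n + 1) * (lastc x / ‖x - emb y'‖ ^ (n + 1)) := by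
    have : 0 < lastc x := hx; positivity
  rw [mpk_eq_of_one_lt_norm m hd hy', abs_mul, abs_of_nonneg hfac]
  exact ⟨fun hs ↦ by nlinarith [hlarge hs], fun hs ↦ by nlinarith [hsmall hs]⟩

/-- Estimates for the modified Poisson kernel in the half space: with `s' = |x|/|y'|`,
`|P_m(x,y')| ≤ A (x_n/|x-(y',0)|^N) s'^{m+N-1}` if `s' > 1` and
`|P_m(x,y')| ≤ A (x_n/|x-(y',0)|^N) s'^m` if `s' ≤ 1` (ambient dimension `N = n+1`). -/
theorem stmt_12 (n : ℕ) (hn : 2 ≤ n) (m : ℕ) :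
    ∃ A > (0 : ℝ), ∀ x ∈ hsp n, ∀ y' : ES n, 1 < ‖y'‖ →
      (1 < ‖x‖ / ‖y'‖ →
        |mpk n m x y'| ≤ A * (lastc x / ‖x - emb y'‖ ^ (n + 1)) * (‖x‖ / ‖y'‖) ^ (m + n)) ∧
      (‖x‖ / ‖y'‖ ≤ 1 →
        |mpk n m x y'| ≤ A * (lastc x / ‖x - emb y'‖ ^ (n + 1)) * (‖x‖ / ‖y'‖) ^ m) :=
  stmt_12_general n m
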